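/- For every n ≥ 1, the Colless index of the binary echelon tree satisfies C(T^be_n) = Σ_{i=1}^{w(n)-1} ( f_n(i+1) - f_n(i)·(w(n) - i) ), where w(n) is the binary weight of n and f_n(1) < ... < f_n(w(n)) are the powers of two in the binary expansion of n. -/

import Mathlib

/-- Rooted binary trees: a leaf, or an internal vertex with two child subtrees. -/
inductive BTree where
  | leaf : BTree
  | node : BTree → BTree → BTree
deriving DecidableEq

namespace BTree

/-- Number of leaves of a rooted binary tree. -/
def numLeaves : BTree → ℕ
  | leaf => 1
  | node l r => numLeaves l + numLeaves r

/-- Sackin index: sum over internal vertices `v` of `n_{v_a} + n_{v_b}`. -/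
def sackin : BTree → ℕ
  | leaf => 0
  | node l r => sackin l + sackin r + (numLeaves l + numLeaves r)

/-- Colless index: sum over internal vertices `v` of `|n_{v_a} - n_{v_b}|`. -/
def colless : BTree → ℕ
  | leaf => 0
  | node l r =>
      colless l + colless r +
        (max (numLeaves l) (numLeaves r) - min (numLeaves l) (numLeaves r))

/-- `N_a`: sum over internal vertices of the larger child-subtree leaf count. -/
def Na : BTree → ℕ
  | leaf => 0
  | node l r => Na l + Na r + max (numLeaves l) (numLeaves r)

/-- `N_b`: sum over internal vertices of the smaller child-subtree leaf count. -/
def Nb : BTree → ℕ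
  | leaf => 0
  | node l r => Nb l + Nb r + min (numLeaves l) (numLeaves r)

/-- `Δ_CS = C - S`, as an integer. -/
def deltaCS (T : BTree) : ℤ := (colless T : ℤ) - (sackin T : ℤ)

/-- Caterpillar trees: every internal vertex has at least one leaf child. -/
def isCaterpillar : BTree → Prop
  | leaf => True
  | node l r => (l = leaf ∧ isCaterpillar r) ∨ (r = leaf ∧ isCaterpillar l)

/-- The fully balanced tree of height `h`. -/
def fbTree : ℕ → BTree
  | 0 => leaf
  | h + 1 => node (fbTree h) (fbTree h)

end BTree

namespace BTree

/-- The binary echelon tree `T^be_n`: for `n > 1` with `k = ⌈log₂ n⌉`,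
`T^be_n = (T^fb_{k-1}, T^be_{n - 2^{k-1}})`. -/
def beTree : ℕ → BTree
  | 0 => leaf
  | 1 => leaf
  | n + 2 =>
      node (fbTree (Nat.clog 2 (n + 2) - 1))
        (beTree ((n + 2) - 2 ^ (Nat.clog 2 (n + 2) - 1)))
decreasing_by
  have : 0 < 2 ^ (Nat.clog 2 (n + 2) - 1) := pow_pos (by norm_num) _
  omega

/-- The exponents of the powers of two in the binary expansion of `n`, in
increasing order; `f_n(i) = 2 ^ (expList n)[i-1]` and `w(n) = (expList n).length`. -/
def expList (n : ℕ) : List ℕ := (List.range (n + 1)).filter (fun i => n.testBit i)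

end BTree

namespace BTree

lemma numLeaves_fbTree (h : ℕ) : numLeaves (fbTree h) = 2^h := by
  induction h with
  | zero => rfl
  | succ h ih =>
    have : 2^(h+1) = 2^h * 2 := pow_succ 2 h
    simp only [fbTree, numLeaves, ih]
    omega

lemma colless_fbTree (h : ℕ) : colless (fbTree h) = 0 := by
  induction h with
  | zero => rfl
  | succ h ih => simp [fbTree, colless, ih]

lemma beTree_eq (n : ℕ) (h : 2 ≤ n) :
    beTree n = node (fbTree (Nat.clog 2 n - 1)) (beTree (n - 2 ^ (Nat.clog 2 n - 1))) := by
  obtain ⟨p, rfl⟩ : ∃ p, n = p + 2 := ⟨n - 2, by omega⟩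
  rw [beTree]

lemma beTree_one : beTree 1 = leaf := by rw [beTree]

lemma clog_facts (n : ℕ) (h : 2 ≤ n) :
    2 ^ (Nat.clog 2 n - 1) < n ∧ n ≤ 2 ^ (Nat.clog 2 n - 1) * 2 := by
  have hk : 0 < Nat.clog 2 n := Nat.clog_pos (by norm_num) h
  constructor
  · exact Nat.pow_pred_clog_lt_self (by norm_num) (by omega)
  · have h1 : n ≤ 2 ^ Nat.clog 2 n := Nat.le_pow_clog (by norm_num) n
    have h2 : 2 ^ Nat.clog 2 n = 2 ^ (Nat.clog 2 n - 1) * 2 := by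
      rw [← pow_succ]
      congr 1
      omega
    omega

lemma numLeaves_beTree (n : ℕ) (hn : 1 ≤ n) : numLeaves (beTree n) = n := by
  induction n using Nat.strong_induction_on with
  | _ n ih =>
    rcases eq_or_lt_of_le hn with h1 | h2
    · rw [← h1, beTree_one]; rfl
    · obtain ⟨hlow, hhigh⟩ := clog_facts n h2
      have hpos : 0 < 2 ^ (Nat.clog 2 n - 1) := pow_pos (by norm_num) _
      rw [beTree_eq n h2]
      simp only [numLeaves, numLeaves_fbTree]
      rw [ih _ (by omega) (by omega)]
      omega

lemma colless_beTree_step (n : ℕ) (hn : 2 ≤ n) :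
    colless (beTree n) = colless (beTree (n - 2 ^ (Nat.clog 2 n - 1)))
      + (2 ^ (Nat.clog 2 n - 1) - (n - 2 ^ (Nat.clog 2 n - 1))) := by
  obtain ⟨hlow, hhigh⟩ := clog_facts n hn
  have hpos : 0 < 2 ^ (Nat.clog 2 n - 1) := pow_pos (by norm_num) _
  rw [beTree_eq n hn]
  simp only [colless, colless_fbTree, numLeaves_fbTree,
    numLeaves_beTree _ (by omega : 1 ≤ n - 2 ^ (Nat.clog 2 n - 1))]
  rw [Nat.max_eq_left (by omega), Nat.min_eq_right (by omega)]
  omega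


lemma filter_range_stable (n K1 K2 : ℕ) (h : K1 ≤ K2) (hn : n < 2^K1) :
    (List.range K2).filter (fun i => n.testBit i) = (List.range K1).filter (fun i => n.testBit i) := by
  rw [show K2 = K1 + (K2 - K1) by omega, List.range_add, List.filter_append]
  have : (List.map (K1 + ·) (List.range (K2 - K1))).filter (fun i => n.testBit i) = [] := by
    apply List.filter_eq_nil_iff.mpr
    intro a ha
    simp only [List.mem_map] at ha
    obtain ⟨b, _, rfl⟩ := ha
    have : n < 2 ^ (K1 + b) :=
      lt_of_lt_of_le hn (Nat.pow_le_pow_right (by norm_num) (by omega))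
    simp [Nat.testBit_eq_false_of_lt this]
  simp [this]

lemma expList_eq_filter (n K : ℕ) (hK : n < 2^K) :
    expList n = (List.range K).filter (fun i => n.testBit i) := by
  have hn1 : n < 2 ^ (n + 1) := lt_of_lt_of_le (Nat.lt_two_pow_self (n := n))
    (Nat.pow_le_pow_right (by norm_num) (by omega))
  unfold expList
  rw [← filter_range_stable n (n+1) (max (n+1) K) (le_max_left _ _) hn1,
    filter_range_stable n K (max (n+1) K) (le_max_right _ _) hK]

lemma expList_add_pow (E m : ℕ) (hm : m < 2^E) :
    expList (2^E + m) = expList m ++ [E] := by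
  have h1 : 2^E + m < 2^(E+1) := by
    have : 2^(E+1) = 2^E * 2 := pow_succ 2 E
    omega
  rw [expList_eq_filter _ (E+1) h1, List.range_succ, List.filter_append]
  have hbitE : (2^E + m).testBit E = true := by
    rw [Nat.testBit_two_pow_add_eq]
    simp [Nat.testBit_eq_false_of_lt hm]
  have h2 : (List.range E).filter (fun i => (2^E+m).testBit i)
      = (List.range E).filter (fun i => m.testBit i) := by
    apply List.filter_congr
    intro a ha
    simp only [List.mem_range] at ha
    rw [Nat.testBit_two_pow_add_gt ha]
  rw [h2, ← expList_eq_filter m E hm]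
  simp [hbitE]

lemma expList_zero : expList 0 = [] := by decide

lemma expList_sum (m : ℕ) : ((expList m).map (fun e => (2:ℕ)^e)).sum = m := by
  induction m using Nat.strong_induction_on with
  | _ m ih =>
    rcases Nat.eq_zero_or_pos m with rfl | hm
    · simp [expList_zero]
    · set E := Nat.log 2 m with hE
      have h1 : 2^E ≤ m := Nat.pow_log_le_self 2 (by omega)
      have h2 : m < 2^(E+1) := Nat.lt_pow_succ_log_self (by norm_num) m
      have h3 : m - 2^E < 2^E := by
        have : 2^(E+1) = 2^E * 2 := pow_succ 2 E
        omega
      have h4 := expList_add_pow E (m - 2^E) h3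
      rw [show 2^E + (m - 2^E) = m by omega] at h4
      have h5 : 0 < 2^E := Nat.pow_pos (by norm_num)
      rw [h4, List.map_append, List.sum_append, ih _ (by omega)]
      simp
      omega

lemma sum_getD (f : ℕ → ℤ) : ∀ L : List ℕ,
    (∑ i ∈ Finset.range L.length, f (L.getD i 0)) = (L.map f).sum
  | [] => by simp
  | a :: L => by
    rw [List.length_cons, Finset.sum_range_succ']
    simp only [List.getD_cons_succ, List.getD_cons_zero]
    rw [sum_getD f L]
    simp [add_comm]

lemma expList_sum_int (m : ℕ) :
    (∑ i ∈ Finset.range (expList m).length, (2:ℤ)^((expList m).getD i 0)) = (m:ℤ) := by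
  rw [sum_getD]
  have : (expList m).map (fun e => (2:ℤ)^e)
      = (expList m).map (fun e => ((2^e : ℕ) : ℤ)) := by
    simp
  rw [this, show (fun e => ((2^e : ℕ) : ℤ)) = (Nat.cast ∘ fun e => (2^e : ℕ)) from rfl,
    ← List.map_map, ← Nat.cast_list_sum, expList_sum]

lemma expList_ne_nil (m : ℕ) (hm : 1 ≤ m) : (expList m).length ≠ 0 := by
  intro h
  have := expList_sum m
  rw [List.length_eq_zero_iff.mp h] at this
  simp at this
  omega

lemma sum_step (L : List ℕ) (E : ℕ) (hL : 1 ≤ L.length) :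
    (∑ i ∈ Finset.range ((L ++ [E]).length - 1),
      ((2:ℤ) ^ ((L ++ [E]).getD (i+1) 0) -
        (2:ℤ) ^ ((L ++ [E]).getD i 0) * (((L ++ [E]).length : ℤ) - (i+1))))
    = (∑ i ∈ Finset.range (L.length - 1),
        ((2:ℤ) ^ (L.getD (i+1) 0) - (2:ℤ) ^ (L.getD i 0) * ((L.length : ℤ) - (i+1))))
      + 2^E - ∑ i ∈ Finset.range L.length, (2:ℤ)^(L.getD i 0) := by
  set w := L.length with hw
  have hlen : (L ++ [E]).length - 1 = w := by simp [hw]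
  have hlenc : ((L ++ [E]).length : ℤ) = (w : ℤ) + 1 := by simp [hw]
  rw [hlen, hlenc]
  rw [show w = (w-1)+1 by omega, Finset.sum_range_succ, Finset.sum_range_succ]
  simp only [show (w-1)+1 = w from by omega]
  have hE : (L ++ [E]).getD w 0 = E := by
    rw [List.getD_append_right L [E] 0 w (le_of_eq hw)]
    simp [hw]
  have hlast : (L ++ [E]).getD (w-1) 0 = L.getD (w-1) 0 :=
    List.getD_append L [E] 0 (w-1) (by omega)
  have hcast : ((w - 1 : ℕ) : ℤ) = (w : ℤ) - 1 := by
    have := Nat.cast_sub (R := ℤ) hL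
    simpa using this
  have hmain : ∑ i ∈ Finset.range (w-1),
      ((2:ℤ) ^ ((L ++ [E]).getD (i+1) 0) -
        (2:ℤ) ^ ((L ++ [E]).getD i 0) * (((w : ℤ) + 1) - (i+1)))
      = ∑ i ∈ Finset.range (w-1),
        (((2:ℤ) ^ (L.getD (i+1) 0) - (2:ℤ) ^ (L.getD i 0) * ((w : ℤ) - (i+1)))
          - (2:ℤ) ^ (L.getD i 0)) := by
    apply Finset.sum_congr rfl
    intro i hi
    simp only [Finset.mem_range] at hi
    rw [List.getD_append L [E] 0 (i+1) (by omega), List.getD_append L [E] 0 i (by omega)]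
    ring
  rw [hmain, Finset.sum_sub_distrib, hE, hlast, hcast]
  ring

end BTree

open BTree in
/-- `C(T^be_n) = Σ_{i=1}^{w(n)-1} ( f_n(i+1) - f_n(i)·(w(n)-i) )`. -/
theorem colless_beTree (n : ℕ) (hn : 1 ≤ n) :
    (colless (beTree n) : ℤ) =
      ∑ i ∈ Finset.range ((expList n).length - 1),
        ((2 : ℤ) ^ ((expList n).getD (i + 1) 0) -
          (2 : ℤ) ^ ((expList n).getD i 0) *
            (((expList n).length : ℤ) - (i + 1))) := by
  induction n using Nat.strong_induction_on with
  | _ n ih =>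
    rcases eq_or_lt_of_le hn with h1 | h2
    · rw [← h1, beTree_one, show expList 1 = [0] from by decide]
      simp [colless]
    · obtain ⟨hlow, hhigh⟩ := clog_facts n h2
      set E := Nat.clog 2 n - 1 with hE
      set m := n - 2 ^ E with hm
      have hpos : 0 < 2 ^ E := pow_pos (by norm_num) _
      have hm1 : 1 ≤ m := by omega
      have hmle : m ≤ 2 ^ E := by omega
      have hrec := colless_beTree_step n h2
      have ihm := ih m (by omega) hm1
      by_cases hc : m = 2 ^ E
      · have hEL : expList n = [E + 1] := by
          rw [show n = 2 ^ (E + 1) from by rw [pow_succ]; omega]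
          simpa [expList_zero] using expList_add_pow (E + 1) 0 (pow_pos (by norm_num) _)
        have hELm : expList m = [E] := by
          rw [hc]
          simpa [expList_zero] using expList_add_pow E 0 hpos
        rw [hrec, show 2 ^ E - m = 0 from by omega, add_zero, ihm, hEL, hELm]
        simp
      · have hlt : m < 2 ^ E := by omega
        have hLn : expList n = expList m ++ [E] := by
          rw [show n = 2 ^ E + m from by omega]
          exact expList_add_pow E m hlt
        have hw : 1 ≤ (expList m).length := Nat.one_le_iff_ne_zero.mpr (expList_ne_nil m hm1)
        rw [hrec, Nat.cast_add, ihm, Nat.cast_sub hmle, hLn, sum_step _ _ hw]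
        have hsum := expList_sum_int m
        rw [hsum]
        push_cast
        ring
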